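/- Let p, e ∈ ℝ³ with e₃ > 0. Then (for every t ∈ T, ‖t − p‖ < ‖t − e‖) if and only if (e₁ = p₁, e₂ = p₂, and e₃ > |p₃|). (Lemma 1: the pursuer winning subspace of the one-pursuer game is the open vertical ray above the pursuer's projection starting at height |p₃|.) -/

import Mathlib

/-!
Expanding the squares, `‖t - e‖² - ‖t - p‖² = ‖e‖² - ‖p‖² - 2⟪t, e - p⟫`. On a linear subspace
the linear term is unbounded unless it vanishes, so the strict inequality holds on all of `T`
iff `e - p ⟂ T` and `‖p‖ < ‖e‖`. For the plane `T` this says that `e` and `p` share their first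
two coordinates and `|p₃| < e₃`.
-/

open RealInnerProductSpace

section InnerProductSpace

variable {E : Type*} [NormedAddCommGroup E] [InnerProductSpace ℝ E]

lemma inner_eq_zero_of_forall_inner_smul_lt {t v : E} {c : ℝ}
    (h : ∀ s : ℝ, ⟪s • t, v⟫ < c) : ⟪t, v⟫ = 0 := by
  by_contra hne
  simpa [real_inner_smul_left, div_mul_cancel₀ c hne] using h (c / ⟪t, v⟫)

lemma norm_sub_lt_norm_sub_iff_inner_lt (t p e : E) :
    ‖t - p‖ < ‖t - e‖ ↔ 2 * ⟪t, e - p⟫ < ‖e‖ ^ 2 - ‖p‖ ^ 2 := by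
  rw [← sq_lt_sq₀ (norm_nonneg _) (norm_nonneg _), norm_sub_sq_real, norm_sub_sq_real,
    inner_sub_right]
  constructor <;> intro h <;> linarith

theorem forall_mem_norm_sub_lt_norm_sub_iff (K : Submodule ℝ E) (p e : E) :
    (∀ t ∈ K, ‖t - p‖ < ‖t - e‖) ↔ e - p ∈ Kᗮ ∧ ‖p‖ < ‖e‖ := by
  simp only [norm_sub_lt_norm_sub_iff_inner_lt, Submodule.mem_orthogonal]
  constructor
  · intro h
    have hpe : 0 < ‖e‖ ^ 2 - ‖p‖ ^ 2 := by simpa using h 0 K.zero_mem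
    refine ⟨fun t ht ↦ inner_eq_zero_of_forall_inner_smul_lt (c := (‖e‖ ^ 2 - ‖p‖ ^ 2) / 2)
      fun s ↦ ?_, ?_⟩
    · linarith [h _ (K.smul_mem s ht)]
    · exact (sq_lt_sq₀ (norm_nonneg _) (norm_nonneg _)).mp (by linarith)
  · rintro ⟨horth, hpe⟩ t ht
    rw [horth t ht, mul_zero, sub_pos]
    gcongr

end InnerProductSpace

lemma EuclideanSpace.mem_orthogonal_ker_projₗ_iff {𝕜 ι : Type*} [RCLike 𝕜] [Fintype ι]
    [DecidableEq ι] (i : ι) (v : EuclideanSpace 𝕜 ι) :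
    v ∈ (LinearMap.ker (EuclideanSpace.projₗ (𝕜 := 𝕜) i))ᗮ ↔ ∀ j ≠ i, v j = 0 := by
  rw [Submodule.mem_orthogonal]
  constructor
  · intro h j hj
    simpa [EuclideanSpace.inner_single_left] using h (EuclideanSpace.single j 1) (by simp [hj])
  · intro h t ht
    rw [LinearMap.mem_ker] at ht
    rw [PiLp.inner_apply]
    refine Finset.sum_eq_zero fun j _ ↦ ?_
    by_cases hj : j = i
    · simp_all
    · simp [h j hj]

theorem one_pursuer_winning (p e : EuclideanSpace ℝ (Fin 3)) (he : e 2 > 0) :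
    (∀ t : EuclideanSpace ℝ (Fin 3), t 2 = 0 → ‖t - p‖ < ‖t - e‖) ↔
    (e 0 = p 0 ∧ e 1 = p 1 ∧ e 2 > |p 2|) := by
  change (∀ t ∈ LinearMap.ker (EuclideanSpace.projₗ (𝕜 := ℝ) (2 : Fin 3)), _) ↔ _
  have hperp : (∀ j ≠ 2, (e - p) j = 0) ↔ e 0 = p 0 ∧ e 1 = p 1 := by
    simp [Fin.forall_fin_succ, sub_eq_zero]
  rw [forall_mem_norm_sub_lt_norm_sub_iff, EuclideanSpace.mem_orthogonal_ker_projₗ_iff, hperp,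
    and_assoc]
  refine and_congr_right fun h0 ↦ and_congr_right fun h1 ↦ ?_
  rw [← sq_lt_sq₀ (norm_nonneg _) (norm_nonneg _), EuclideanSpace.real_norm_sq_eq,
    EuclideanSpace.real_norm_sq_eq, Fin.sum_univ_three, Fin.sum_univ_three, h0, h1,
    add_lt_add_iff_left, sq_lt_sq, abs_of_pos he, gt_iff_lt]
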